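/- arXiv:1411.6135 — 4 statements merged into one kernel-verified Lean document; each statement's English description precedes it below -/
import Mathlib

section
/- If a mode W partitioning the agent set A is the disjoint union of regular sub-modes W_1, …, W_l, where W_i consists of k_i modalities each of cardinality m_i and the m_i are pairwise distinct, then the complete modal graph KM_W is isomorphic to the Cartesian product KM_{W_1} □ … □ KM_{W_l}, and hence to K_{2^{m_1}}^{□ k_1} □ … □ K_{2^{m_l}}^{□ k_l}. -/
/-- The complete modal graph of a mode `W` over an agent set `α`. -/
def KM {α : Type*} (W : Finset (Finset α)) : SimpleGraph (α → Bool) where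
  Adj b1 b2 := ∃ w ∈ W, (∃ i ∈ w, b1 i ≠ b2 i) ∧ ∀ i ∉ w, b1 i = b2 i
  symm := by
    constructor
    rintro b1 b2 ⟨w, hw, ⟨i, hi, hne⟩, hout⟩
    exact ⟨w, hw, ⟨i, hi, hne.symm⟩, fun j hj => (hout j hj).symm⟩
  loopless := by constructor; rintro b ⟨w, _, ⟨i, _, hne⟩, _⟩; exact hne rfl

/-- The Cartesian (box) product of a family of graphs: two tuples are adjacent
iff they are adjacent in exactly one coordinate and equal elsewhere. -/
def boxFamily {ι : Type*} {V : ι → Type*} (G : ∀ i, SimpleGraph (V i)) :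
    SimpleGraph (∀ i, V i) where
  Adj x y := ∃ i, (G i).Adj (x i) (y i) ∧ ∀ j, j ≠ i → x j = y j
  symm := by
    constructor
    rintro x y ⟨i, hadj, h⟩
    exact ⟨i, hadj.symm, fun j hj => (h j hj).symm⟩
  loopless := by constructor; rintro x ⟨i, hadj, _⟩; exact (G i).irrefl hadj

/-- The Cartesian product of `k` copies of the complete graph `K_{2^m}`. -/
def completeBoxPow (k m : ℕ) : SimpleGraph (Fin k → (Fin m → Bool)) where
  Adj x y := ∃ j, x j ≠ y j ∧ ∀ i, i ≠ j → x i = y i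
  symm := by
    constructor
    rintro x y ⟨j, hne, h⟩
    exact ⟨j, hne.symm, fun i hi => (h i hi).symm⟩
  loopless := by constructor; rintro x ⟨j, hne, _⟩; exact hne rfl

/-- The support of a sub-mode: the set of agents occurring in its modalities. -/
def modeSupp {n : ℕ} (Wi : Finset (Finset (Fin n))) : Finset (Fin n) :=
  Wi.biUnion id

/-- A sub-mode restricted to the subtype of agents in its support. -/
def restrictMode {n : ℕ} (Wi : Finset (Finset (Fin n))) :
    Finset (Finset {a : Fin n // a ∈ modeSupp Wi}) :=
  Wi.image (fun w => w.subtype (· ∈ modeSupp Wi))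

/-!
Give each agent the unique sub-mode whose support contains it: modalities of different sub-modes
have different sizes, so no modality is shared, and the supports partition the agents. A vertex
`b : Fin n → Bool` is then the tuple of its restrictions to the supports, and a modality changes
only the coordinate of the sub-mode it belongs to; this is the first isomorphism. Applying the
same splitting to a regular sub-mode, now along its `k` modalities, leaves factors of a single
modality containing all of its `m` agents, i.e. complete graphs on `Fin m → Bool`.
-/

open Finset

def boxFamilyCongr {ι : Type*} {V V' : ι → Type*} {G : ∀ i, SimpleGraph (V i)}
    {G' : ∀ i, SimpleGraph (V' i)} (e : ∀ i, G i ≃g G' i) :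
    boxFamily G ≃g boxFamily G' where
  toEquiv := Equiv.piCongrRight fun i => (e i).toEquiv
  map_rel_iff' := by
    intro x y
    constructor
    · rintro ⟨i, hadj, h⟩
      exact ⟨i, (e i).map_rel_iff.mp hadj, fun j hj => (e j).injective (h j hj)⟩
    · rintro ⟨i, hadj, h⟩
      exact ⟨i, (e i).map_rel_iff.mpr hadj, fun j hj => congrArg (e j) (h j hj)⟩

theorem boxFamily_top_eq_completeBoxPow (k m : ℕ) :
    boxFamily (fun _ : Fin k => (⊤ : SimpleGraph (Fin m → Bool))) = completeBoxPow k m :=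
  rfl

theorem Finset.pairwiseDisjoint_id_of_existsUnique_mem {α : Type*} {W : Finset (Finset α)}
    (hpart : ∀ a, ∃! w, w ∈ W ∧ a ∈ w) : (W : Set (Finset α)).PairwiseDisjoint id :=
  fun _ hw _ hw' hne => Finset.disjoint_left.2 fun a ha ha' =>
    hne ((hpart a).unique ⟨hw, ha⟩ ⟨hw', ha'⟩)

namespace KM

theorem eq_top {β : Type*} {V : Finset (Finset β)} (hV : V.Nonempty)
    (hfull : ∀ w ∈ V, ∀ a, a ∈ w) : KM V = ⊤ := by
  ext b1 b2
  obtain ⟨w, hw⟩ := hV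
  simp only [KM, SimpleGraph.top_adj, Function.ne_iff]
  constructor
  · rintro ⟨-, -, ⟨a, -, ha⟩, -⟩
    exact ⟨a, ha⟩
  · rintro ⟨a, ha⟩
    exact ⟨w, hw, ⟨a, hfull w hw a, ha⟩, fun b hb => absurd (hfull w hw b) hb⟩

noncomputable def isoBoxFamily {α ι : Type*} [DecidableEq α] (p : ι → α → Prop)
    [∀ i, DecidablePred (p i)] (hp : ∀ a, ∃! i, p i a)
    (W : Finset (Finset α)) (Wf : ι → Finset (Finset α))
    (hWf : ∀ i, ∀ w ∈ Wf i, ∀ a ∈ w, p i a) (hW : ∀ w, w ∈ W ↔ ∃ i, w ∈ Wf i) :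
    KM W ≃g boxFamily fun i => KM ((Wf i).image fun w => w.subtype (p i)) where
  toFun b i a := b a
  invFun g a := g (hp a).choose ⟨a, (hp a).choose_spec.1⟩
  left_inv _ := rfl
  right_inv g := by
    funext i ⟨a, ha⟩
    obtain rfl : i = (hp a).choose := (hp a).choose_spec.2 i ha
    rfl
  map_rel_iff' {b1 b2} := by
    constructor
    · rintro ⟨i, ⟨w', hw', ⟨x, hx, hne⟩, hout⟩, hother⟩
      obtain ⟨w, hw, rfl⟩ := mem_image.mp hw'
      refine ⟨w, (hW w).mpr ⟨i, hw⟩, ⟨x, mem_subtype.mp hx, hne⟩, fun a ha => ?_⟩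
      obtain ⟨j, hj, -⟩ := hp a
      by_cases hji : j = i
      · subst hji
        exact hout ⟨a, hj⟩ fun h => ha (mem_subtype.mp h)
      · exact congrFun (hother j hji) ⟨a, hj⟩
    · rintro ⟨w, hwW, ⟨x, hx, hne⟩, hout⟩
      obtain ⟨i, hwi⟩ := (hW w).mp hwW
      refine ⟨i, ⟨w.subtype (p i), mem_image_of_mem _ hwi,
        ⟨⟨x, hWf i w hwi x hx⟩, mem_subtype.mpr hx, hne⟩,
        fun a ha => hout a fun h => ha (mem_subtype.mpr h)⟩, fun j hj => ?_⟩
      funext a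
      exact hout a fun h => hj ((hp a).unique a.2 (hWf i w hwi a h))

noncomputable def restrictModeIsoCompleteBoxPow {n k m : ℕ} (V : Finset (Finset (Fin n)))
    (hV : (V : Set (Finset (Fin n))).PairwiseDisjoint id) (hk : V.card = k)
    (hm : ∀ w ∈ V, w.card = m) : KM (restrictMode V) ≃g completeBoxPow k m := by
  let ek : Fin k ≃ V := (V.equivFin.trans (finCongr hk)).symm
  let p (j : Fin k) (a : modeSupp V) : Prop := a.1 ∈ (ek j).1
  have hp : ∀ a, ∃! j, p j a := by
    rintro ⟨a, ha⟩
    obtain ⟨w, hw, haw⟩ := mem_biUnion.mp ha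
    refine ⟨ek.symm ⟨w, hw⟩, by simpa [p] using haw, fun j hj => ek.eq_symm_apply.mpr ?_⟩
    exact Subtype.ext (hV.elim_finset (ek j).2 hw a hj haw)
  let Wf (j : Fin k) : Finset (Finset (modeSupp V)) := {(ek j).1.subtype (· ∈ modeSupp V)}
  have hWf : ∀ j, ∀ w ∈ Wf j, ∀ a ∈ w, p j a := by
    intro j w hw a haw
    rw [mem_singleton.mp hw] at haw
    exact mem_subtype.mp haw
  have hW : ∀ w, w ∈ restrictMode V ↔ ∃ j, w ∈ Wf j := by
    intro w
    simp only [restrictMode, mem_image, Wf, mem_singleton]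
    constructor
    · rintro ⟨v, hv, rfl⟩
      exact ⟨ek.symm ⟨v, hv⟩, by simp⟩
    · rintro ⟨j, rfl⟩
      exact ⟨(ek j).1, (ek j).2, rfl⟩
  have factor : ∀ j, KM ((Wf j).image fun w => w.subtype (p j)) ≃g
      (⊤ : SimpleGraph (Fin m → Bool)) := by
    intro j
    rw [eq_top (by simp [Wf]) (by simp [Wf, p])]
    have hj := (ek j).2
    exact SimpleGraph.Iso.completeGraph <| Equiv.arrowCongr
      ((Equiv.subtypeSubtypeEquivSubtype fun h => mem_biUnion.mpr ⟨_, hj, h⟩).trans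
        ((ek j).1.equivFin.trans (finCongr (hm _ hj)))) (Equiv.refl Bool)
  rw [← boxFamily_top_eq_completeBoxPow]
  exact (isoBoxFamily p hp _ Wf hWf hW).trans (boxFamilyCongr factor)

end KM

theorem existsUnique_mem_modeSupp {n l : ℕ} (m : Fin l → ℕ) (hm : Function.Injective m)
    (Wsub : Fin l → Finset (Finset (Fin n))) (hcard : ∀ i, ∀ w ∈ Wsub i, w.card = m i)
    (hpart : ∀ a, ∃! w, w ∈ univ.biUnion Wsub ∧ a ∈ w) (a : Fin n) :
    ∃! i, a ∈ modeSupp (Wsub i) := by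
  obtain ⟨w, ⟨hwW, haw⟩, huniq⟩ := hpart a
  obtain ⟨i, -, hwi⟩ := mem_biUnion.mp hwW
  refine ⟨i, mem_biUnion.mpr ⟨w, hwi, haw⟩, fun j hj => hm ?_⟩
  obtain ⟨w', hw'j, haw'⟩ := mem_biUnion.mp hj
  have hw' : w' = w := huniq w' ⟨mem_biUnion.mpr ⟨j, mem_univ j, hw'j⟩, haw'⟩
  rw [← hcard j w' hw'j, hw', hcard i w hwi]

theorem KM_decomposes_over_regular_submodes {n l : ℕ}
    (k m : Fin l → ℕ) (hm : Function.Injective m)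
    (Wsub : Fin l → Finset (Finset (Fin n)))
    (W : Finset (Finset (Fin n)))
    (hW : W = Finset.univ.biUnion Wsub)
    (hk : ∀ i, (Wsub i).card = k i)
    (hcard : ∀ i, ∀ w ∈ Wsub i, w.card = m i)
    (hpart : ∀ a : Fin n, ∃! w, w ∈ W ∧ a ∈ w) :
    Nonempty (KM W ≃g boxFamily (fun i => KM (restrictMode (Wsub i)))) ∧
    Nonempty (KM W ≃g boxFamily (fun i => completeBoxPow (k i) (m i))) := by
  subst hW
  have iso₁ : KM (univ.biUnion Wsub) ≃g boxFamily fun i => KM (restrictMode (Wsub i)) :=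
    KM.isoBoxFamily (fun i a => a ∈ modeSupp (Wsub i))
      (existsUnique_mem_modeSupp m hm Wsub hcard hpart) _ Wsub
      (fun i w hw a ha => mem_biUnion.mpr ⟨w, hw, ha⟩) (by simp)
  have hdisj := pairwiseDisjoint_id_of_existsUnique_mem hpart
  have iso₂ : ∀ i, KM (restrictMode (Wsub i)) ≃g completeBoxPow (k i) (m i) := fun i =>
    KM.restrictModeIsoCompleteBoxPow (Wsub i)
      (hdisj.subset fun w hw => mem_biUnion.mpr ⟨i, mem_univ i, hw⟩) (hk i) (hcard i)
  exact ⟨⟨iso₁⟩, ⟨iso₁.trans (boxFamilyCongr iso₂)⟩⟩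
end

section
/- If two networks sharing a mode W partitioning the agents are dynamically equivalent via an isomorphism φ = (β, π) in SP (i.e., the model of the second is the image under φ of the model of the first), then their interaction modal graphs are isomorphic, the isomorphism on modalities being given by the permutation π: for every arc (w_i, w_j) of the IMG of f, (w_{π(i)}, w_{π(j)}) is an arc of the IMG of f', and conversely. -/
/-- Update only the coordinates in `w` according to `f`. -/
def tildeF {n : ℕ} (f : (Fin n → Bool) → (Fin n → Bool)) (w : Finset (Fin n))
    (s : Fin n → Bool) : Fin n → Bool :=
  fun i => if i ∈ w then f s i else s i

/-- Modality `wi` interacts with modality `wj` (for evolution function `f`):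
some change of state localized inside `wi` changes the value of `f` inside `wj`. -/
def Interacts {n : ℕ} (f : (Fin n → Bool) → (Fin n → Bool))
    (wi wj : Finset (Fin n)) : Prop :=
  ∃ s1 s2 : Fin n → Bool,
    (∃ a ∈ wi, s1 a ≠ s2 a) ∧ (∀ a ∉ wi, s1 a = s2 a) ∧
    (∃ a ∈ wj, f s1 a ≠ f s2 a)

/-- One direction of the IMG isomorphism: an interaction transfers along a
blockwise isomorphism conjugating the asynchronous updates. -/
lemma interacts_transfer {n k : ℕ} (W : Fin k → Finset (Fin n))
    (hpart : ∀ a : Fin n, ∃! i, a ∈ W i)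
    (f f' : (Fin n → Bool) → (Fin n → Bool))
    (φ : Equiv.Perm (Fin n → Bool)) (π : Equiv.Perm (Fin k))
    (hb : ∀ i : Fin k, ∀ s1 s2 : Fin n → Bool,
      (∀ a ∈ W i, s1 a = s2 a) → ∀ a ∈ W (π i), φ s1 a = φ s2 a)
    (hb' : ∀ i : Fin k, ∀ s1 s2 : Fin n → Bool,
      (∀ a ∈ W (π i), s1 a = s2 a) → ∀ a ∈ W i, φ.symm s1 a = φ.symm s2 a)
    (hkey : ∀ i s, φ (tildeF f (W i) s) = tildeF f' (W (π i)) (φ s))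
    (i j : Fin k) :
    Interacts f (W i) (W j) → Interacts f' (W (π i)) (W (π j)) := by
  have hdisj : ∀ {a : Fin n} {i1 i2 : Fin k}, a ∈ W i1 → a ∈ W i2 → i1 = i2 := by
    intro a i1 i2 h1 h2
    obtain ⟨i0, _, hu⟩ := hpart a
    exact (hu i1 h1).trans (hu i2 h2).symm
  rintro ⟨s1, s2, ⟨a, ha, hane⟩, hout, ⟨b, hbj, hfne⟩⟩
  -- the images agree outside W (π i)
  have hagree : ∀ c, c ∉ W (π i) → φ s1 c = φ s2 c := by
    intro c hc
    obtain ⟨i', hi', -⟩ := hpart c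
    have hi'ne : i' ≠ π i := fun h => hc (h ▸ hi')
    have hc' : c ∈ W (π (π.symm i')) := by rwa [π.apply_symm_apply]
    refine hb (π.symm i') s1 s2 (fun x hx => ?_) c hc'
    refine hout x (fun hxi => hi'ne ?_)
    have : π.symm i' = i := hdisj hx hxi
    rw [← this, π.apply_symm_apply]
  refine ⟨φ s1, φ s2, ?_, hagree, ?_⟩
  · -- the images differ somewhere, necessarily inside W (π i)
    have hne : φ s1 ≠ φ s2 := by
      intro h
      exact hane (congrFun (φ.injective h) a)
    obtain ⟨c, hc⟩ := Function.ne_iff.mp hne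
    exact ⟨c, by by_contra hmem; exact hc (hagree c hmem), hc⟩
  · -- images under f' differ inside W (π j)
    set u1 := tildeF f (W j) s1 with hu1
    set u2 := tildeF f (W j) s2 with hu2
    have hub : u1 b ≠ u2 b := by
      simpa [hu1, hu2, tildeF, hbj] using hfne
    have hexc : ∃ c ∈ W (π j), φ u1 c ≠ φ u2 c := by
      by_contra hall
      push_neg at hall
      have : ∀ x ∈ W j, u1 x = u2 x := by
        intro x hx
        have := hb' j (φ u1) (φ u2) hall x hx
        simpa using this
      exact hub (this b hbj)
    obtain ⟨c, hcj, hcne⟩ := hexc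
    refine ⟨c, hcj, ?_⟩
    have e1 : φ u1 c = f' (φ s1) c := by
      rw [hu1, hkey j s1]; simp [tildeF, hcj]
    have e2 : φ u2 c = f' (φ s2) c := by
      rw [hu2, hkey j s2]; simp [tildeF, hcj]
    rw [e1, e2] at hcne
    exact hcne

/-- If two networks `(f, W)` and `(f', W)`, for a mode `W = (w_1, …, w_k)`
partitioning the agents, are dynamically equivalent via a mode-preserving
isomorphism `φ = (β, π)` (acting blockwise, with `π` permuting the modalities),
then their interaction modal graphs are isomorphic via `π`: `(w_i, w_j)` is an
arc of the IMG of `f` iff `(w_{π i}, w_{π j})` is an arc of the IMG of `f'`. -/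
theorem IMG_iso_of_equivalent {n k : ℕ}
    (W : Fin k → Finset (Fin n))
    (hpart : ∀ a : Fin n, ∃! i, a ∈ W i)
    (f f' : (Fin n → Bool) → (Fin n → Bool))
    (φ : Equiv.Perm (Fin n → Bool)) (π : Equiv.Perm (Fin k))
    (hcard : ∀ i, (W (π i)).card = (W i).card)
    -- φ acts blockwise: the block `π i` of `φ s` depends only on the block `i` of `s`
    (hblock : ∀ i : Fin k, ∀ s1 s2 : Fin n → Bool,
      (∀ a ∈ W i, s1 a = s2 a) → ∀ a ∈ W (π i), φ s1 a = φ s2 a)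
    (hblock' : ∀ i : Fin k, ∀ s1 s2 : Fin n → Bool,
      (∀ a ∈ W (π i), s1 a = s2 a) → ∀ a ∈ W i, φ.symm s1 a = φ.symm s2 a)
    -- φ is an isomorphism between the model of (f, W) and the model of (f', W)
    (hmodel : ∀ i : Fin k, ∀ s1 s2 : Fin n → Bool,
      (s2 = tildeF f (W i) s1 ∧ s1 ≠ s2) ↔
      (φ s2 = tildeF f' (W (π i)) (φ s1) ∧ φ s1 ≠ φ s2)) :
    ∀ i j : Fin k, i ≠ j →
      (Interacts f (W i) (W j) ↔ Interacts f' (W (π i)) (W (π j))) := by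
  -- key conjugation identity
  have hkey : ∀ i s, φ (tildeF f (W i) s) = tildeF f' (W (π i)) (φ s) := by
    intro i s
    by_cases h : s = tildeF f (W i) s
    · by_contra hne
      rw [← h] at hne
      set u := φ.symm (tildeF f' (W (π i)) (φ s)) with hu
      have h1 : φ u = tildeF f' (W (π i)) (φ s) := φ.apply_symm_apply _
      have h2 : φ s ≠ φ u := by rw [h1]; exact hne
      obtain ⟨he, hne2⟩ := (hmodel i s u).mpr ⟨h1, h2⟩
      exact hne2 (he.trans h.symm).symm
    · exact ((hmodel i s _).mp ⟨rfl, h⟩).1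
  have hkey' : ∀ i s, φ.symm (tildeF f' (W i) s) = tildeF f (W (π.symm i)) (φ.symm s) := by
    intro i s
    have := hkey (π.symm i) (φ.symm s)
    rw [π.apply_symm_apply, φ.apply_symm_apply] at this
    rw [← this, φ.symm_apply_apply]
  intro i j hij
  constructor
  · exact interacts_transfer W hpart f f' φ π hblock hblock' hkey i j
  · intro h
    have hb : ∀ i : Fin k, ∀ s1 s2 : Fin n → Bool,
        (∀ a ∈ W i, s1 a = s2 a) → ∀ a ∈ W (π.symm i), φ.symm s1 a = φ.symm s2 a := by
      intro i0 s1 s2 hagr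
      refine hblock' (π.symm i0) s1 s2 ?_
      rwa [π.apply_symm_apply]
    have hb' : ∀ i : Fin k, ∀ s1 s2 : Fin n → Bool,
        (∀ a ∈ W (π.symm i), s1 a = s2 a) → ∀ a ∈ W i, φ.symm.symm s1 a = φ.symm.symm s2 a := by
      intro i0 s1 s2 hagr a hai
      have : a ∈ W (π (π.symm i0)) := by rwa [π.apply_symm_apply]
      simpa using hblock (π.symm i0) s1 s2 hagr a this
    have := interacts_transfer W hpart f' f φ.symm π.symm hb hb' hkey' (π i) (π j) h
    simpa using this
end

section
/- If the mode W (a partition of A into modalities w_1, …, w_k) is π-embedded into the mode W' (also a partition of A), then any isomorphism φ = (β, π) preserving W also preserves W': each blockwise permutation β_i acts only within some modality of W', and π induces a well-defined permutation of the modalities of W' mapping each modality of W' to a modality of W' of the same cardinality. -/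
/-- `W` (indexed by `Fin k`) is `π`-embedded into `W'` (indexed by `Fin k'`):
every modality of `W` is contained in some modality of `W'`, and two modalities
of `W` lie in a common modality of `W'` iff their `π`-images do. -/
def PiEmbedded {n k k' : ℕ} (W : Fin k → Finset (Fin n))
    (W' : Fin k' → Finset (Fin n)) (π : Equiv.Perm (Fin k)) : Prop :=
  (∀ i, ∃ j, W i ⊆ W' j) ∧
  (∀ i1 i2 : Fin k,
    (∃ j, W i1 ∪ W i2 ⊆ W' j) ↔ (∃ j, W (π i1) ∪ W (π i2) ⊆ W' j))

/-- If the mode `W` is `π`-embedded into the mode `W'` (both partitioning the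
agents), and `(β, π)` preserves `W` (so `|W (π i)| = |W i|`), then the
isomorphism also preserves `W'`: each block of `W` (on which a blockwise
permutation `β_i` acts) lies inside a modality of `W'`, and `π` induces a
well-defined permutation `π'` of the modalities of `W'` mapping each modality
of `W'` to one of the same cardinality. -/
theorem embedded_mode_preserved {n k k' : ℕ}
    (W : Fin k → Finset (Fin n)) (W' : Fin k' → Finset (Fin n))
    (hWpart : ∀ a : Fin n, ∃! i, a ∈ W i)
    (hW'part : ∀ a : Fin n, ∃! j, a ∈ W' j)
    (π : Equiv.Perm (Fin k))
    (hcard : ∀ i, (W (π i)).card = (W i).card)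
    (hemb : PiEmbedded W W' π) :
    (∀ i, ∃ j, W i ⊆ W' j) ∧
    ∃ π' : Equiv.Perm (Fin k'),
      (∀ i j, W i ⊆ W' j → W (π i) ⊆ W' (π' j)) ∧
      (∀ j, (W' (π' j)).card = (W' j).card) := by
  classical
  obtain ⟨hE, hIff⟩ := hemb
  choose g hg using hE
  -- uniqueness helpers
  have huniq' : ∀ {a : Fin n} {j1 j2 : Fin k'}, a ∈ W' j1 → a ∈ W' j2 → j1 = j2 := by
    intro a j1 j2 h1 h2
    obtain ⟨j, _, hu⟩ := hW'part a
    rw [hu j1 h1, hu j2 h2]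
  have huniq : ∀ {a : Fin n} {i1 i2 : Fin k}, a ∈ W i1 → a ∈ W i2 → i1 = i2 := by
    intro a i1 i2 h1 h2
    obtain ⟨i, _, hu⟩ := hWpart a
    rw [hu i1 h1, hu i2 h2]
  have hgu : ∀ i j, (W i).Nonempty → W i ⊆ W' j → g i = j := by
    intro i j ⟨a, ha⟩ hs
    exact huniq' (hg i ha) (hs ha)
  have hπne : ∀ i, (W (π i)).Nonempty ↔ (W i).Nonempty := by
    intro i
    rw [← Finset.card_pos, ← Finset.card_pos, hcard]
  -- key compatibility
  have L1 : ∀ i1 i2, (W i1).Nonempty → (W i2).Nonempty →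
      (g i1 = g i2 ↔ g (π i1) = g (π i2)) := by
    intro i1 i2 h1 h2
    constructor
    · intro h
      have hex : ∃ j, W i1 ∪ W i2 ⊆ W' j := by
        refine ⟨g i1, Finset.union_subset (hg i1) ?_⟩
        rw [h]; exact hg i2
      obtain ⟨j, hj⟩ := (hIff i1 i2).mp hex
      rw [hgu (π i1) j ((hπne i1).mpr h1) (Finset.union_subset_iff.mp hj).1,
        hgu (π i2) j ((hπne i2).mpr h2) (Finset.union_subset_iff.mp hj).2]
    · intro h
      have hex : ∃ j, W (π i1) ∪ W (π i2) ⊆ W' j := by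
        refine ⟨g (π i1), Finset.union_subset (hg (π i1)) ?_⟩
        rw [h]; exact hg (π i2)
      obtain ⟨j, hj⟩ := (hIff i1 i2).mpr hex
      rw [hgu i1 j h1 (Finset.union_subset_iff.mp hj).1,
        hgu i2 j h2 (Finset.union_subset_iff.mp hj).2]
  -- the block of an agent
  choose bl hbl _ using hWpart
  -- the induced map on W'-modalities
  set f : Fin k' → Fin k' :=
    fun j => if h : (W' j).Nonempty then g (π (bl h.choose)) else j with hf_def
  have L2 : ∀ i j, (W i).Nonempty → W i ⊆ W' j → f j = g (π i) := by
    intro i j hne hs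
    obtain ⟨a, ha⟩ := hne
    have hjne : (W' j).Nonempty := ⟨a, hs ha⟩
    have hfj : f j = g (π (bl hjne.choose)) := by
      simp only [hf_def, dif_pos hjne]
    have hgi0 : g (bl hjne.choose) = j :=
      huniq' (hg _ (hbl hjne.choose)) hjne.choose_spec
    have hgi : g i = j := hgu i j ⟨a, ha⟩ hs
    have : g (bl hjne.choose) = g i := by rw [hgi0, hgi]
    rw [hfj, ← (L1 _ i ⟨_, hbl hjne.choose⟩ ⟨a, ha⟩).mp this]
  have L3 : ∀ j, (W' j).Nonempty →
      ∃ i, (W i).Nonempty ∧ g i = j ∧ f j = g (π i) := by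
    intro j hj
    refine ⟨bl hj.choose, ⟨_, hbl hj.choose⟩, ?_, ?_⟩
    · exact huniq' (hg _ (hbl hj.choose)) hj.choose_spec
    · have hgi : g (bl hj.choose) = j := huniq' (hg _ (hbl hj.choose)) hj.choose_spec
      refine L2 _ j ⟨_, hbl hj.choose⟩ ?_
      intro x hx
      have hx' := hg (bl hj.choose) hx
      rwa [hgi] at hx'
  have hfempty : ∀ j, ¬ (W' j).Nonempty → f j = j := by
    intro j hj; simp only [hf_def, dif_neg hj]
  have hfne : ∀ j, (W' j).Nonempty → (W' (f j)).Nonempty := by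
    intro j hj
    obtain ⟨i, hine, _, hfj⟩ := L3 j hj
    obtain ⟨b, hb⟩ := (hπne i).mpr hine
    exact ⟨b, hfj ▸ hg (π i) hb⟩
  have hinj : Function.Injective f := by
    intro j1 j2 h
    by_cases h1 : (W' j1).Nonempty <;> by_cases h2 : (W' j2).Nonempty
    · obtain ⟨i1, hi1ne, hgi1, hfj1⟩ := L3 j1 h1
      obtain ⟨i2, hi2ne, hgi2, hfj2⟩ := L3 j2 h2
      have : g (π i1) = g (π i2) := by rw [← hfj1, ← hfj2, h]
      have := (L1 i1 i2 hi1ne hi2ne).mpr this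
      rw [← hgi1, ← hgi2, this]
    · exfalso; apply h2
      have := hfne j1 h1
      rwa [h, hfempty j2 h2] at this
    · exfalso; apply h1
      have := hfne j2 h2
      rwa [← h, hfempty j1 h1] at this
    · rw [← hfempty j1 h1, ← hfempty j2 h2, h]
  have hbij : Function.Bijective f := Finite.injective_iff_bijective.mp hinj
  refine ⟨fun i => ⟨g i, hg i⟩, Equiv.ofBijective f hbij, ?_, ?_⟩
  · intro i j hs
    by_cases hne : (W i).Nonempty
    · have : (Equiv.ofBijective f hbij) j = g (π i) := L2 i j hne hs
      rw [this]; exact hg (π i)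
    · have : W (π i) = ∅ := by
        rw [← Finset.not_nonempty_iff_eq_empty]
        exact fun h => hne ((hπne i).mp h)
      simp [this]
  · intro j
    show (W' (f j)).card = (W' j).card
    by_cases hjne : (W' j).Nonempty
    · set T : Finset (Fin k) :=
        Finset.univ.filter (fun i => (W i).Nonempty ∧ W i ⊆ W' j) with hT
      have hmemT : ∀ i, i ∈ T ↔ (W i).Nonempty ∧ W i ⊆ W' j := by
        intro i; simp [hT]
      have hWj : W' j = T.biUnion W := by
        ext a
        simp only [Finset.mem_biUnion]
        constructor
        · intro ha
          refine ⟨bl a, (hmemT _).mpr ⟨⟨a, hbl a⟩, ?_⟩, hbl a⟩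
          have : g (bl a) = j := huniq' (hg _ (hbl a)) ha
          exact this ▸ hg (bl a)
        · rintro ⟨i, hi, hai⟩
          exact ((hmemT i).mp hi).2 hai
      have hWfj : W' (f j) = T.biUnion (fun i => W (π i)) := by
        ext a
        simp only [Finset.mem_biUnion]
        constructor
        · intro ha
          obtain ⟨i0, hi0ne, hgi0, hfj⟩ := L3 j hjne
          set i : Fin k := π.symm (bl a) with hi
          have hπi : π i = bl a := π.apply_symm_apply (bl a)
          have haWi : a ∈ W (π i) := hπi ▸ hbl a
          have hiine : (W i).Nonempty := (hπne i).mp ⟨a, haWi⟩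
          have h1 : g (π i) = f j := huniq' (hg _ haWi) ha
          have h2 : g (π i) = g (π i0) := by rw [h1, hfj]
          have h3 : g i = j := by rw [(L1 i i0 hiine hi0ne).mpr h2, hgi0]
          exact ⟨i, (hmemT i).mpr ⟨hiine, h3 ▸ hg i⟩, haWi⟩
        · rintro ⟨i, hi, hai⟩
          obtain ⟨hine, his⟩ := (hmemT i).mp hi
          have : f j = g (π i) := L2 i j hine his
          exact this ▸ hg (π i) hai
      have hdisj : ∀ i1 ∈ T, ∀ i2 ∈ T, i1 ≠ i2 → Disjoint (W i1) (W i2) := by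
        intro i1 _ i2 _ hne
        rw [Finset.disjoint_left]
        intro a h1 h2
        exact hne (huniq h1 h2)
      have hdisj' : ∀ i1 ∈ T, ∀ i2 ∈ T, i1 ≠ i2 →
          Disjoint (W (π i1)) (W (π i2)) := by
        intro i1 _ i2 _ hne
        rw [Finset.disjoint_left]
        intro a h1 h2
        exact hne (π.injective (huniq h1 h2))
      rw [hWj, hWfj, Finset.card_biUnion hdisj', Finset.card_biUnion hdisj]
      exact Finset.sum_congr rfl (fun i _ => hcard i)
    · rw [hfempty j hjne]
end

section
/- The sequential mode {{a}}_{a ∈ A} is π-embedded (with π = identity) into every mode W' partitioning A; consequently any two networks equivalent for the sequential mode via an isomorphism (β, id) are equivalent for every partitioning mode. -/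
/-- The sequential mode (all singletons) is `id`-embedded into every mode
partitioning the agents; consequently, two networks equivalent for the
sequential mode via an isomorphism `(β, id)` — i.e. via a state bijection `φ`
acting coordinatewise which is an isomorphism of the sequential models — are
equivalent for every partitioning mode `W'`. -/
theorem sequential_embedded_and_equivalence_transfers {n : ℕ} :
    (∀ k' : ℕ, ∀ W' : Fin k' → Finset (Fin n),
      (∀ a : Fin n, ∃! j, a ∈ W' j) →
      PiEmbedded (fun i : Fin n => {i}) W' 1) ∧
    (∀ f f' : (Fin n → Bool) → (Fin n → Bool), ∀ φ : Equiv.Perm (Fin n → Bool),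
      -- φ acts coordinatewise (π = id): coordinate i of φ s depends only on s i
      (∀ i : Fin n, ∀ s1 s2 : Fin n → Bool, s1 i = s2 i → φ s1 i = φ s2 i) →
      -- φ is an isomorphism between the sequential-mode models of f and f'
      (∀ i : Fin n, ∀ s1 s2 : Fin n → Bool,
        (s2 = tildeF f {i} s1 ∧ s1 ≠ s2) ↔
        (φ s2 = tildeF f' {i} (φ s1) ∧ φ s1 ≠ φ s2)) →
      -- then φ is an isomorphism between the models for any partitioning mode
      ∀ k' : ℕ, ∀ W' : Fin k' → Finset (Fin n), (∀ a : Fin n, ∃! j, a ∈ W' j) →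
        ∀ j : Fin k', ∀ s1 s2 : Fin n → Bool,
          (s2 = tildeF f (W' j) s1 ∧ s1 ≠ s2) ↔
          (φ s2 = tildeF f' (W' j) (φ s1) ∧ φ s1 ≠ φ s2)) := by
  constructor
  · intro k' W' hpart
    constructor
    · intro i
      obtain ⟨j, hj, -⟩ := hpart i
      exact ⟨j, by simp [Finset.singleton_subset_iff, hj]⟩
    · intro i1 i2
      simp [Equiv.Perm.one_def]
  · intro f f' φ hcoord hseq k' W' _hpart j s1 s2
    -- Key lemma: φ intertwines f and f' coordinatewise.
    have key : ∀ (s : Fin n → Bool) (i : Fin n), φ (f s) i = f' (φ s) i := by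
      intro s i
      by_cases h : f s i = s i
      · -- trivial step at i on the left; show the same on the right
        have hfix : tildeF f {i} s = s := by
          funext a
          by_cases ha : a = i <;> simp [tildeF, ha, h]
        have h2 : f' (φ s) i = φ s i := by
          by_contra hne
          set t := φ.symm (tildeF f' {i} (φ s)) with ht
          have hφt : φ t = tildeF f' {i} (φ s) := φ.apply_symm_apply _
          have hφti : φ t i = f' (φ s) i := by
            rw [hφt]; simp [tildeF]
          have hneq : φ s ≠ φ t := by
            intro hEq
            exact hne (by rw [← hφti, ← hEq])
          have := (hseq i s t).mpr ⟨hφt, hneq⟩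
          exact this.2 (by rw [this.1, hfix])
        rw [h2]
        exact hcoord i (f s) s h
      · -- genuine step at i
        set s2' := tildeF f {i} s with hs2'
        have hstep : s2' = tildeF f {i} s := rfl
        have hne : s ≠ s2' := by
          intro hEq
          apply h
          have : s2' i = f s i := by simp [hs2', tildeF]
          rw [← this, ← hEq]
        have := (hseq i s s2').mp ⟨hstep, hne⟩
        have h1 : φ s2' i = f' (φ s) i := by
          rw [this.1]; simp [tildeF]
        have h2 : φ (f s) i = φ s2' i :=
          hcoord i (f s) s2' (by simp [hs2', tildeF])
        rw [h2, h1]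
    -- φ commutes with every tildeF update.
    have comm : ∀ (w : Finset (Fin n)) (s : Fin n → Bool),
        φ (tildeF f w s) = tildeF f' w (φ s) := by
      intro w s
      funext i
      by_cases hi : i ∈ w
      · have : φ (tildeF f w s) i = φ (f s) i :=
          hcoord i _ _ (by simp [tildeF, hi])
        rw [this, key]
        simp [tildeF, hi]
      · have : φ (tildeF f w s) i = φ s i :=
          hcoord i _ _ (by simp [tildeF, hi])
        rw [this]
        simp [tildeF, hi]
    constructor
    · rintro ⟨h1, h2⟩
      refine ⟨by rw [h1, comm], fun hEq => h2 (φ.injective hEq)⟩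
    · rintro ⟨h1, h2⟩
      refine ⟨φ.injective (by rw [h1, comm]), fun hEq => h2 (by rw [hEq])⟩
end
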